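/- Assume φ(x,x',y) ∧ amo*(x) is a URC encoding of a constraint f(x,x'), and amo'(x,z) is a PC encoding of AMO(x) with auxiliary variables z which contains no positive literal on any variable of x. Then φ(x,x',y) ∧ amo'(x,z) is a URC encoding of f(x,x'). -/

import Mathlib

set_option autoImplicit false

universe u v

/-- A literal: a boolean variable together with a polarity. -/
structure Lit (V : Type u) where
  var : V
  pos : Bool

/-- The complementary literal. -/
def Lit.negate {V : Type u} (l : Lit V) : Lit V := ⟨l.var, !l.pos⟩

/-- A literal is satisfied by a total assignment. -/
def Lit.eval {V : Type u} (a : V → Bool) (l : Lit V) : Prop := a l.var = l.pos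

/-- A clause is a (finite in all our uses) disjunction of a set of literals. -/
abbrev Clause (V : Type u) := Set (Lit V)

/-- A CNF formula is a conjunction of a set of clauses. -/
abbrev CNF (V : Type u) := Set (Clause V)

/-- A clause is satisfied iff some of its literals is. -/
def Clause.Sat {V : Type u} (a : V → Bool) (C : Clause V) : Prop := ∃ l ∈ C, Lit.eval a l

/-- A CNF formula is satisfied iff all of its clauses are. -/
def CNF.Sat {V : Type u} (a : V → Bool) (φ : CNF V) : Prop := ∀ C ∈ φ, Clause.Sat a C

def CNF.Satisfiable {V : Type u} (φ : CNF V) : Prop := ∃ a : V → Bool, CNF.Sat a φ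

/-- `φ ⊨ l`. -/
def CNF.Entails {V : Type u} (φ : CNF V) (l : Lit V) : Prop :=
  ∀ a : V → Bool, CNF.Sat a φ → Lit.eval a l

/-- A partial assignment, i.e. a set of literals, is consistent if it contains
no complementary pair of literals. -/
def ConsistentPA {V : Type u} (α : Set (Lit V)) : Prop := ∀ l ∈ α, Lit.negate l ∉ α

/-- The set of unit clauses corresponding to a partial assignment `α`;
`φ ∪ paUnits α` represents `φ ∧ α`. -/
def paUnits {V : Type u} (α : Set (Lit V)) : CNF V := (fun l => ({l} : Clause V)) '' α

/-- Derivability by repeated unit resolution: from a clause `C ∋ l` and the unit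
clause `¬l` derive `C \ {l}`.  `UnitDeriv φ ∅` means `φ ⊢₁ ⊥` and
`UnitDeriv φ {l}` means `φ ⊢₁ l`. -/
inductive UnitDeriv {V : Type u} (φ : CNF V) : Clause V → Prop where
  | base {C : Clause V} : C ∈ φ → UnitDeriv φ C
  | step {C : Clause V} (l : Lit V) : l ∈ C → UnitDeriv φ C →
      UnitDeriv φ {Lit.negate l} → UnitDeriv φ (C \ {l})

/-- The set of variables occurring in a CNF formula. -/
def CNF.vars {V : Type u} (φ : CNF V) : Set V := ⋃ C ∈ φ, Lit.var '' C

/-- All literals of `α` are literals on the variables `W`. -/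
def LitsOn {V : Type u} (α : Set (Lit V)) (W : Set V) : Prop := ∀ l ∈ α, l.var ∈ W

/-- `φ` is unit refutation complete on the variables `W`. -/
def URCon {V : Type u} (φ : CNF V) (W : Set V) : Prop :=
  ∀ α : Set (Lit V), ConsistentPA α → LitsOn α W →
    ¬ CNF.Satisfiable (φ ∪ paUnits α) → UnitDeriv (φ ∪ paUnits α) ∅

/-- `φ` is propagation complete on the variables `W`. -/
def PCon {V : Type u} (φ : CNF V) (W : Set V) : Prop :=
  ∀ α : Set (Lit V), ConsistentPA α → LitsOn α W →
    ∀ l : Lit V, l.var ∈ W → CNF.Entails (φ ∪ paUnits α) l →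
      UnitDeriv (φ ∪ paUnits α) {l} ∨ UnitDeriv (φ ∪ paUnits α) ∅

/-- `φ` is a CNF encoding of the function `f` with input variables `X`
(the remaining variables of `φ` being auxiliary); `f` is assumed to depend
only on the values of the variables in `X`. -/
def IsEncodingOn {V : Type u} (φ : CNF V) (X : Set V) (f : (V → Bool) → Prop) : Prop :=
  ∀ a : V → Bool, f a ↔ ∃ b : V → Bool, (∀ x ∈ X, b x = a x) ∧ CNF.Sat b φ

/-- The positive literal on a variable. -/
def posL {V : Type u} (x : V) : Lit V := ⟨x, true⟩
/-- The negative literal on a variable. -/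
def negL {V : Type u} (x : V) : Lit V := ⟨x, false⟩

/-- The at-most-one constraint on the variables in `x`. -/
def AMOpred {V : Type u} (x : Set V) (a : V → Bool) : Prop :=
  ∀ u ∈ x, ∀ v ∈ x, a u = true → a v = true → u = v

/-- `amo*(x)`: the canonical representation of the at-most-one constraint,
consisting of all its prime implicates `¬u ∨ ¬v` for distinct `u, v ∈ x`. -/
def amoStar {V : Type u} (x : Set V) : CNF V :=
  {C | ∃ u ∈ x, ∃ v ∈ x, u ≠ v ∧ C = ({negL u, negL v} : Clause V)}

/-!
Models transfer between the two encodings by keeping the values on `x, x', y` and taking the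
values on `z` from a model of `amo'`.

For unit refutation completeness, let `φ ∧ amo' ∧ α` be unsatisfiable and let `αₓ` be the part
of `α` on `x ∪ z`. By propagation completeness, unit propagation in `amo' ∧ αₓ` derives every
literal `¬u`, `u ∈ x`, implied by `amo' ∧ αₓ`; let `β` be the part of `α` on `x, x', y` together
with these literals. Then `φ ∧ amo*(x) ∧ β` is unsatisfiable: a model `b` of it has at most one
true variable `u` in `x`, some model of `amo' ∧ αₓ` makes `u` true, and as `amo'` has only
negative literals on `x`, that model may be lowered to `b` on `x`, giving a model of
`φ ∧ amo' ∧ α`. So `φ ∧ amo*(x) ∧ β` has a unit refutation. In it, each resolution with a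
clause `¬u ∨ ¬v` of `amo*(x)` consumes a derived literal `u`, from which propagation in `amo'`
derives `¬v` directly; this turns it into a unit refutation of `φ ∧ amo' ∧ α`.
-/

variable {V : Type u}

namespace CNF

theorem sat_union {a : V → Bool} {φ ψ : CNF V} : Sat a (φ ∪ ψ) ↔ Sat a φ ∧ Sat a ψ :=
  ⟨fun h => ⟨fun C hC => h C (.inl hC), fun C hC => h C (.inr hC)⟩,
    fun h C hC => hC.elim (h.1 C) (h.2 C)⟩

theorem sat_paUnits {a : V → Bool} {α : Set (Lit V)} :
    Sat a (paUnits α) ↔ ∀ l ∈ α, Lit.eval a l := by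
  simp [Sat, paUnits, Clause.Sat]

theorem var_mem_vars {φ : CNF V} {C : Clause V} {l : Lit V} (hC : C ∈ φ) (hl : l ∈ C) :
    l.var ∈ vars φ :=
  Set.mem_biUnion hC ⟨l, hl, rfl⟩

theorem Sat.congr {φ : CNF V} {a b : V → Bool} (ha : Sat a φ)
    (hab : ∀ v ∈ vars φ, a v = b v) : Sat b φ := by
  intro C hC
  obtain ⟨l, hl, hal⟩ := ha C hC
  exact ⟨l, hl, by rwa [Lit.eval, ← hab _ (var_mem_vars hC hl)]⟩

theorem Sat.of_le_of_negative {φ : CNF V} {X : Set V}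
    (hneg : ∀ C ∈ φ, ∀ l ∈ C, l.var ∈ X → l.pos = false) {a b : V → Bool} (ha : Sat a φ)
    (hle : ∀ v ∈ X, b v = true → a v = true) (hout : ∀ v ∈ vars φ, v ∉ X → a v = b v) :
    Sat b φ := by
  intro C hC
  obtain ⟨l, hl, hal⟩ := ha C hC
  refine ⟨l, hl, ?_⟩
  by_cases hlX : l.var ∈ X
  · have hpos := hneg C hC l hl hlX
    rw [Lit.eval, hpos] at hal ⊢
    cases hb : b l.var
    · rfl
    · simp [hle _ hlX hb] at hal
  · rwa [Lit.eval, ← hout _ (var_mem_vars hC hl) hlX]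

end CNF

theorem amoStar_nontrivial {x : Set V} {C : Clause V} (hC : C ∈ amoStar x) : C.Nontrivial := by
  obtain ⟨u, -, v, -, huv, rfl⟩ := hC
  exact Set.nontrivial_pair fun h => huv (congrArg Lit.var h)

theorem sat_amoStar_iff {x : Set V} {a : V → Bool} : CNF.Sat a (amoStar x) ↔ AMOpred x a := by
  constructor
  · intro h u hu v hv hau hav
    by_contra huv
    obtain ⟨l, hl, hal⟩ := h _ ⟨u, hu, v, hv, huv, rfl⟩
    rcases hl with rfl | rfl <;> simp_all [Lit.eval, negL]
  · rintro h C ⟨u, hu, v, hv, huv, rfl⟩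
    by_contra hC
    simp only [Clause.Sat, Set.mem_insert_iff, Set.mem_singleton_iff, exists_eq_or_imp,
      exists_eq_left, Lit.eval, negL, not_or, Bool.not_eq_false] at hC
    exact huv (h u hu v hv hC.1 hC.2)

namespace UnitDeriv

variable {φ ψ : CNF V}

theorem of_mem_paUnits {α : Set (Lit V)} {l : Lit V} (hl : l ∈ α) :
    UnitDeriv (φ ∪ paUnits α) {l} :=
  .base (.inr ⟨l, hl, rfl⟩)

theorem empty_of_complementary {l : Lit V} (h : UnitDeriv φ {l})
    (hn : UnitDeriv φ {l.negate}) : UnitDeriv φ ∅ := by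
  simpa using h.step l (Set.mem_singleton l) hn

theorem of_paUnits {φ₀ : CNF V} {α : Set (Lit V)} (hsub : φ₀ ⊆ φ)
    (hα : ∀ l ∈ α, UnitDeriv φ {l}) {C : Clause V} (d : UnitDeriv (φ₀ ∪ paUnits α) C) :
    UnitDeriv φ C := by
  induction d with
  | base hC =>
    rcases hC with hC | ⟨l, hl, rfl⟩
    exacts [.base (hsub hC), hα l hl]
  | step l hl _ _ ihC ihu => exact .step l hl ihC ihu

theorem simulate_amoStar {Φ : CNF V} {x : Set V}
    (hΦ : ∀ C ∈ Φ, UnitDeriv ψ C ∨ C ∈ amoStar x)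
    (hres : ∀ u ∈ x, ∀ v ∈ x, u ≠ v → UnitDeriv ψ {posL u} → UnitDeriv ψ {negL v})
    {C : Clause V} (d : UnitDeriv Φ C) : UnitDeriv ψ C ∨ C ∈ amoStar x := by
  induction d with
  | base hC => exact hΦ _ hC
  | step l hl _ _ ihC ihu =>
    rcases ihu with hu | hu
    swap
    · exact absurd rfl (amoStar_nontrivial hu).ne_singleton
    rcases ihC with hC | ⟨u, hux, v, hvx, huv, rfl⟩
    · exact .inl (hC.step l hl hu)
    left
    rcases hl with rfl | rfl
    · rw [Set.insert_sdiff_self_of_notMem (a := negL u) (s := {negL v})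
        fun h => huv (congrArg Lit.var h)]
      exact hres u hux v hvx huv hu
    · rw [Set.pair_comm, Set.insert_sdiff_self_of_notMem (a := negL v) (s := {negL u})
        fun h => huv (congrArg Lit.var h).symm]
      exact hres v hvx u hux huv.symm hu

end UnitDeriv

theorem ConsistentPA.of_unitDeriv {φ : CNF V} {α : Set (Lit V)}
    (hα : ∀ l ∈ α, UnitDeriv φ {l}) (hφ : ¬ UnitDeriv φ ∅) : ConsistentPA α :=
  fun l hl hnl => hφ ((hα l hl).empty_of_complementary (hα _ hnl))

namespace PCon

variable {χ : CNF V} {W : Set V}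

theorem urcon (hv : CNF.vars χ ⊆ W) (hpc : PCon χ W) : URCon χ W := by
  intro α hα hαW hunsat
  have hent : ∀ l, CNF.Entails (χ ∪ paUnits α) l := fun _ a ha => absurd ⟨a, ha⟩ hunsat
  rcases W.eq_empty_or_nonempty with hW | ⟨w, hw⟩
  · have hα0 : ∀ l, l ∉ α := fun l hl => by simpa [hW] using hαW l hl
    obtain ⟨C, hC, hCsat⟩ : ∃ C ∈ χ ∪ paUnits α, ¬ Clause.Sat (fun _ => true) C := by
      by_contra! h
      exact hunsat ⟨_, h⟩
    rcases hC with hC | ⟨l, hl, -⟩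
    · have hC0 : C = ∅ :=
        Set.eq_empty_of_forall_notMem fun l hl => by simpa [hW] using hv (CNF.var_mem_vars hC hl)
      exact hC0 ▸ .base (.inl hC)
    · exact absurd hl (hα0 l)
  · rcases hpc α hα hαW (posL w) hw (hent _) with hp | h
    · rcases hpc α hα hαW (negL w) hw (hent _) with hn | h
      exacts [hp.empty_of_complementary hn, h]
    · exact h

theorem unitDeriv_of_entails (hpc : PCon χ W) {ψ : CNF V} (hχψ : χ ⊆ ψ) {γ : Set (Lit V)}
    (hγ : ConsistentPA γ) (hγW : LitsOn γ W) (hγψ : ∀ l ∈ γ, UnitDeriv ψ {l}) {l : Lit V}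
    (hl : l.var ∈ W) (hent : CNF.Entails (χ ∪ paUnits γ) l) :
    UnitDeriv ψ {l} ∨ UnitDeriv ψ ∅ :=
  (hpc γ hγ hγW l hl hent).imp (.of_paUnits hχψ hγψ) (.of_paUnits hχψ hγψ)

end PCon

theorem exists_sat_ge_of_not_entails {χ : CNF V} {x : Set V} {b : V → Bool}
    (hb : AMOpred x b) (hχ : χ.Satisfiable)
    (hent : ∀ u ∈ x, b u = true → ¬ χ.Entails (negL u)) :
    ∃ c, χ.Sat c ∧ ∀ w ∈ x, b w = true → c w = true := by
  by_cases h : ∃ u ∈ x, b u = true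
  · obtain ⟨u, hux, hbu⟩ := h
    obtain ⟨c, hc, hcu⟩ : ∃ c, χ.Sat c ∧ ¬ Lit.eval c (negL u) := by
      simpa [CNF.Entails] using hent u hux hbu
    refine ⟨c, hc, fun w hw hbw => ?_⟩
    rw [hb w hw u hux hbw hbu]
    simpa [Lit.eval, negL] using hcu
  · push Not at h
    obtain ⟨c, hc⟩ := hχ
    exact ⟨c, hc, fun w hw hbw => absurd hbw (by simp [h w hw])⟩

def restrictPA (α : Set (Lit V)) (W : Set V) : Set (Lit V) := {l ∈ α | l.var ∈ W}

def forcedNeg (χ : CNF V) (x : Set V) (α : Set (Lit V)) : Set (Lit V) :=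
  negL '' {u ∈ x | CNF.Entails (χ ∪ paUnits α) (negL u)}

section Combine

variable {φ χ : CNF V} {x z : Set V}

theorem IsEncodingOn.union_of_amoStar {X : Set V} {f : (V → Bool) → Prop}
    (hXz : Disjoint X z) (hxz : Disjoint x z) (hφz : Disjoint (CNF.vars φ) z)
    (hχv : CNF.vars χ ⊆ x ∪ z) (henc : IsEncodingOn (φ ∪ amoStar x) X f)
    (hχ : IsEncodingOn χ x (AMOpred x)) : IsEncodingOn (φ ∪ χ) X f := by
  classical
  intro a
  rw [henc a]
  constructor
  · rintro ⟨b, hba, hb⟩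
    rw [CNF.sat_union, sat_amoStar_iff] at hb
    obtain ⟨c, hcb, hc⟩ := (hχ b).1 hb.2
    refine ⟨z.piecewise c b, fun v hv => ?_, CNF.sat_union.2 ⟨?_, ?_⟩⟩
    · rw [Set.piecewise_eq_of_notMem _ _ _ (hXz.notMem_of_mem_left hv)]
      exact hba v hv
    · exact hb.1.congr fun v hv =>
        (Set.piecewise_eq_of_notMem _ _ _ (hφz.notMem_of_mem_left hv)).symm
    · refine hc.congr fun v hv => ?_
      rcases hχv hv with hvx | hvz
      · rw [Set.piecewise_eq_of_notMem _ _ _ (hxz.notMem_of_mem_left hvx)]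
        exact hcb v hvx
      · rw [Set.piecewise_eq_of_mem _ _ _ hvz]
  · rintro ⟨b, hba, hb⟩
    rw [CNF.sat_union] at hb
    exact ⟨b, hba, CNF.sat_union.2
      ⟨hb.1, sat_amoStar_iff.2 ((hχ b).2 ⟨b, fun _ _ => rfl, hb.2⟩)⟩⟩

theorem not_satisfiable_amoStar_forcedNeg {W : Set V} (hxz : Disjoint x z)
    (hφz : Disjoint (CNF.vars φ) z) (hχv : CNF.vars χ ⊆ x ∪ z)
    (hnopos : ∀ C ∈ χ, ∀ l ∈ C, l.var ∈ x → l.pos = false)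
    {α : Set (Lit V)} (hαW : LitsOn α (W ∪ z))
    (hunsat : ¬ CNF.Satisfiable ((φ ∪ χ) ∪ paUnits α))
    (hsat : CNF.Satisfiable (χ ∪ paUnits (restrictPA α (x ∪ z)))) :
    ¬ CNF.Satisfiable ((φ ∪ amoStar x) ∪
      paUnits (restrictPA α W ∪ forcedNeg χ x (restrictPA α (x ∪ z)))) := by
  classical
  rintro ⟨b, hb⟩
  simp only [CNF.sat_union, CNF.sat_paUnits, sat_amoStar_iff] at hb
  obtain ⟨⟨hbφ, hbx⟩, hbβ⟩ := hb
  obtain ⟨c, hc, hbc⟩ := exists_sat_ge_of_not_entails hbx hsat fun u hu hbu hent => by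
    simpa [Lit.eval, negL, hbu] using hbβ (negL u) (.inr ⟨u, ⟨hu, hent⟩, rfl⟩)
  rw [CNF.sat_union, CNF.sat_paUnits] at hc
  refine hunsat ⟨z.piecewise c b, CNF.sat_union.2 ⟨CNF.sat_union.2 ⟨?_, ?_⟩, ?_⟩⟩
  · exact hbφ.congr fun v hv =>
      (Set.piecewise_eq_of_notMem _ _ _ (hφz.notMem_of_mem_left hv)).symm
  · refine hc.1.of_le_of_negative hnopos (fun v hv hdv => hbc v hv ?_) fun v hv hvx =>
      (Set.piecewise_eq_of_mem _ _ _ ((hχv hv).resolve_left hvx)).symm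
    rwa [Set.piecewise_eq_of_notMem _ _ _ (hxz.notMem_of_mem_left hv)] at hdv
  · refine CNF.sat_paUnits.2 fun l hl => ?_
    by_cases hz : l.var ∈ z
    · simpa [Lit.eval, hz] using hc.2 l ⟨hl, .inr hz⟩
    · simpa [Lit.eval, hz] using hbβ l (.inl ⟨hl, (hαW l hl).resolve_right hz⟩)

theorem unitDeriv_negL_of_posL (hamo : ∀ a, CNF.Sat a χ → AMOpred x a)
    (hpc : PCon χ (x ∪ z)) {ψ : CNF V} (hχψ : χ ⊆ ψ) (hψ : ¬ UnitDeriv ψ ∅)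
    {γ : Set (Lit V)} (hγW : LitsOn γ (x ∪ z)) (hγψ : ∀ l ∈ γ, UnitDeriv ψ {l})
    {u v : V} (hu : u ∈ x) (hv : v ∈ x) (huv : u ≠ v) (hpu : UnitDeriv ψ {posL u}) :
    UnitDeriv ψ {negL v} := by
  have hγuψ : ∀ l ∈ insert (posL u) γ, UnitDeriv ψ {l} := by
    rintro l (rfl | hl)
    exacts [hpu, hγψ l hl]
  have hγuW : LitsOn (insert (posL u) γ) (x ∪ z) := by
    rintro l (rfl | hl)
    exacts [.inl hu, hγW l hl]
  refine (hpc.unitDeriv_of_entails hχψ (.of_unitDeriv hγuψ hψ) hγuW hγuψ (.inl hv)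
    fun a ha => ?_).resolve_right hψ
  rw [CNF.sat_union, CNF.sat_paUnits] at ha
  by_contra hav
  exact huv (hamo a ha.1 u hu v hv (ha.2 _ (Set.mem_insert _ _))
    (by simpa [Lit.eval, negL] using hav))

theorem URCon.union_of_pcon {W : Set V} (hxz : Disjoint x z) (hxW : x ⊆ W)
    (hφz : Disjoint (CNF.vars φ) z) (hχv : CNF.vars χ ⊆ x ∪ z)
    (hurc : URCon (φ ∪ amoStar x) W) (hamo : ∀ a, CNF.Sat a χ → AMOpred x a)
    (hpc : PCon χ (x ∪ z)) (hnopos : ∀ C ∈ χ, ∀ l ∈ C, l.var ∈ x → l.pos = false) :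
    URCon (φ ∪ χ) (W ∪ z) := by
  intro α hα hαW hunsat
  set ψ := (φ ∪ χ) ∪ paUnits α
  set αₓ := restrictPA α (x ∪ z)
  have hχψ : χ ⊆ ψ := fun C hC => .inl (.inr hC)
  have hαₓ : ConsistentPA αₓ := fun l hl hnl => hα l hl.1 hnl.1
  have hαₓW : LitsOn αₓ (x ∪ z) := fun l hl => hl.2
  have hαₓψ : ∀ l ∈ αₓ, UnitDeriv ψ {l} := fun l hl => .of_mem_paUnits hl.1
  by_cases hsat : CNF.Satisfiable (χ ∪ paUnits αₓ)
  swap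
  · exact (hpc.urcon hχv αₓ hαₓ hαₓW hsat).of_paUnits hχψ hαₓψ
  by_contra hψ
  set β := restrictPA α W ∪ forcedNeg χ x αₓ
  have hβψ : ∀ l ∈ β, UnitDeriv ψ {l} := by
    rintro l (hl | ⟨u, ⟨hu, hent⟩, rfl⟩)
    · exact .of_mem_paUnits hl.1
    · exact (hpc.unitDeriv_of_entails hχψ hαₓ hαₓW hαₓψ (.inl hu) hent).resolve_right hψ
  have hβW : LitsOn β W := by
    rintro l (hl | ⟨u, hu, rfl⟩)
    exacts [hl.2, hxW hu.1]
  have hrefute := hurc β (.of_unitDeriv hβψ hψ) hβW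
    (not_satisfiable_amoStar_forcedNeg hxz hφz hχv hnopos hαW hunsat hsat)
  have hΦ : ∀ C ∈ (φ ∪ amoStar x) ∪ paUnits β, UnitDeriv ψ C ∨ C ∈ amoStar x := by
    rintro C ((hC | hC) | ⟨l, hl, rfl⟩)
    exacts [.inl (.base (.inl (.inl hC))), .inr hC, .inl (hβψ l hl)]
  rcases hrefute.simulate_amoStar hΦ fun u hu v hv huv =>
      unitDeriv_negL_of_posL hamo hpc hχψ hψ hαₓW hαₓψ hu hv huv with h | h
  exacts [hψ h, (amoStar_nontrivial h).nonempty.ne_empty rfl]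

end Combine

theorem stmt1_general {V : Type u} (x x' y z : Set V)
    (hxz : Disjoint x z)
    (hx'z : Disjoint x' z) (hyz : Disjoint y z)
    (φ amo' : CNF V)
    (hφv : CNF.vars φ ⊆ x ∪ x' ∪ y)
    (hamo'v : CNF.vars amo' ⊆ x ∪ z)
    (f : (V → Bool) → Prop)
    (henc : IsEncodingOn (φ ∪ amoStar x) (x ∪ x') f)
    (hurc : URCon (φ ∪ amoStar x) (x ∪ x' ∪ y))
    (henc' : IsEncodingOn amo' x (AMOpred x))
    (hpc' : PCon amo' (x ∪ z))
    (hnopos : ∀ C ∈ amo', ∀ l ∈ C, l.var ∈ x → l.pos = false) :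
    IsEncodingOn (φ ∪ amo') (x ∪ x') f ∧ URCon (φ ∪ amo') (x ∪ x' ∪ y ∪ z) := by
  have hφz : Disjoint (CNF.vars φ) z :=
    Set.disjoint_of_subset_left hφv ((hxz.union_left hx'z).union_left hyz)
  exact ⟨henc.union_of_amoStar (hxz.union_left hx'z) hxz hφz hamo'v henc',
    hurc.union_of_pcon hxz (Set.subset_union_left.trans Set.subset_union_left) hφz hamo'v
      (fun a ha => (henc' a).2 ⟨a, fun _ _ => rfl, ha⟩) hpc' hnopos⟩

/-- If `φ(x,x',y) ∧ amo*(x)` is a URC encoding of a constraint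
`f(x,x')` and `amo'(x,z)` is a PC encoding of `AMO(x)` with auxiliary variables
`z` containing no positive literal on the variables `x`, then
`φ(x,x',y) ∧ amo'(x,z)` is a URC encoding of `f(x,x')`. -/
theorem stmt1 {V : Type u} (x x' y z : Set V)
    (hxx' : Disjoint x x') (hxy : Disjoint x y) (hxz : Disjoint x z)
    (hx'y : Disjoint x' y) (hx'z : Disjoint x' z) (hyz : Disjoint y z)
    (φ amo' : CNF V)
    (hφv : CNF.vars φ ⊆ x ∪ x' ∪ y)
    (hamo'v : CNF.vars amo' ⊆ x ∪ z)
    (f : (V → Bool) → Prop)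
    (hf : ∀ a b : V → Bool, (∀ v ∈ x ∪ x', a v = b v) → (f a ↔ f b))
    (henc : IsEncodingOn (φ ∪ amoStar x) (x ∪ x') f)
    (hurc : URCon (φ ∪ amoStar x) (x ∪ x' ∪ y))
    (henc' : IsEncodingOn amo' x (AMOpred x))
    (hpc' : PCon amo' (x ∪ z))
    (hnopos : ∀ C ∈ amo', ∀ l ∈ C, l.var ∈ x → l.pos = false) :
    IsEncodingOn (φ ∪ amo') (x ∪ x') f ∧ URCon (φ ∪ amo') (x ∪ x' ∪ y ∪ z) :=
  stmt1_general x x' y z hxz hx'z hyz φ amo' hφv hamo'v f henc hurc henc' hpc' hnopos
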